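/- arXiv:0912.3488 — 4 statements merged into one kernel-verified Lean document; each statement's English description precedes it below -/
import Mathlib

section
/- Let μ, ν : 𝔻 → ℝ be Borel measurable, let z₀, w₀ ∈ 𝔻, R > 0, and let m₁, m₂ be disk Möbius transformations. Then d^R_{μ∘m₁, ν∘m₂}(m₁⁻¹(z₀), m₂⁻¹(w₀)) = d^R_{μ,ν}(z₀, w₀), where m₁⁻¹, m₂⁻¹ denote the inverses of m₁, m₂ on 𝔻 (invariance of the local distance under Möbius changes of coordinates). -/
open Complex MeasureTheory ENNReal

noncomputable section

/-- The open unit disk in `ℂ`. -/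
def unitDisk : Set ℂ := {z : ℂ | ‖z‖ < 1}

/-- A disk Möbius transformation: `z ↦ τ (z - a)/(1 - conj a · z)` with `a ∈ 𝔻`, `|τ| = 1`. -/
def IsDiskMobius (m : ℂ → ℂ) : Prop :=
  ∃ a τ : ℂ, ‖a‖ < 1 ∧ ‖τ‖ = 1 ∧
    ∀ z : ℂ, m z = τ * (z - a) / (1 - (starRingEnd ℂ) a * z)

/-- The hyperbolic disk `Ω_{z₀,R}` of radius `R` centered at `z₀`. -/
def hypDisk (z₀ : ℂ) (R : ℝ) : Set ℂ :=
  {z : ℂ | ‖z‖ < 1 ∧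
    ‖(z - z₀) / (1 - (starRingEnd ℂ) z₀ * z)‖ < Real.tanh R}

/-- The hyperbolic area measure `dvol_H = (1 - |z|²)⁻² dλ` on `ℂ`. -/
def volH : Measure ℂ :=
  volume.withDensity (fun z => ENNReal.ofReal (((1 - ‖z‖ ^ 2) ^ 2)⁻¹))

/-- The local dissimilarity distance `d^R_{μ,ν}(z₀,w₀)`, valued in `[0,∞]`. -/
def dR (R : ℝ) (μ ν : ℂ → ℝ) (z₀ w₀ : ℂ) : ℝ≥0∞ :=
  ⨅ m : {m : ℂ → ℂ // IsDiskMobius m ∧ m z₀ = w₀},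
    ∫⁻ z in hypDisk z₀ R, ENNReal.ofReal |μ z - ν (m.1 z)| ∂volH

/-- The measure on `𝔻` with density `μ` w.r.t. the hyperbolic measure. -/
def muH (μ : ℂ → ℝ) : Measure ℂ :=
  (volH.restrict unitDisk).withDensity (fun z => ENNReal.ofReal (μ z))

/-- The generalized Kantorovich transportation cost `T^R_d(μ,ν)`. -/
def TRd (R : ℝ) (μ ν : ℂ → ℝ) : ℝ≥0∞ :=
  ⨅ π : {π : Measure (ℂ × ℂ) //
      π.map Prod.fst = muH μ ∧ π.map Prod.snd = muH ν},
    ∫⁻ p, dR R μ ν p.1 p.2 ∂π.1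

def aOf (z₀ w₀ σ : ℂ) : ℂ :=
  (z₀ - w₀ * (starRingEnd ℂ) σ) / (1 - (starRingEnd ℂ) z₀ * w₀ * (starRingEnd ℂ) σ)

def tauOf (z₀ w₀ σ : ℂ) : ℂ :=
  σ * (1 - (starRingEnd ℂ) z₀ * w₀ * (starRingEnd ℂ) σ) / (1 - z₀ * (starRingEnd ℂ) w₀ * σ)

/-- The Möbius transformation `m_{z₀,w₀,σ}`. -/
def stdMobius (z₀ w₀ σ : ℂ) (z : ℂ) : ℂ :=
  tauOf z₀ w₀ σ * (z - aOf z₀ w₀ σ) / (1 - (starRingEnd ℂ) (aOf z₀ w₀ σ) * z)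

/-- `Φ(z₀,w₀,σ)`. -/
def Phi (R : ℝ) (μ ν : ℂ → ℝ) (z₀ w₀ σ : ℂ) : ℝ≥0∞ :=
  ∫⁻ z in hypDisk z₀ R, ENNReal.ofReal |μ z - ν (stdMobius z₀ w₀ σ z)| ∂volH

/-!
A disk Möbius map `m` preserves the hyperbolic area, because
`1 - |m z|² = |m' z| (1 - |z|²)` makes the Jacobian `|m'|²` cancel the density, and it preserves
the pseudo-hyperbolic distance, so it maps `Ω_{c,R}` onto `Ω_{m c,R}`. Pulling the integral back
along `m₁` turns each competitor `m` for `d^R_{μ,ν}(z₀,w₀)` into the competitor `m₂⁻¹ ∘ m ∘ m₁`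
with the same cost. This gives one inequality; the same argument for the inverse maps gives the
other.
-/

def diskMobius (a τ z : ℂ) : ℂ := τ * (z - a) / (1 - (starRingEnd ℂ) a * z)

lemma isDiskMobius_iff {m : ℂ → ℂ} :
    IsDiskMobius m ↔ ∃ a τ : ℂ, ‖a‖ < 1 ∧ ‖τ‖ = 1 ∧ m = diskMobius a τ := by
  simp only [IsDiskMobius, funext_iff, diskMobius]

lemma isDiskMobius_diskMobius {a τ : ℂ} (ha : ‖a‖ < 1) (hτ : ‖τ‖ = 1) :
    IsDiskMobius (diskMobius a τ) :=
  isDiskMobius_iff.2 ⟨a, τ, ha, hτ, rfl⟩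

lemma normSq_lt_one_of_mem_unitDisk {z : ℂ} (hz : z ∈ unitDisk) : normSq z < 1 := by
  rw [← Complex.sq_norm]; exact pow_lt_one₀ (norm_nonneg z) hz two_ne_zero

lemma conj_mul_self_of_norm_eq_one {τ : ℂ} (hτ : ‖τ‖ = 1) : (starRingEnd ℂ) τ * τ = 1 := by
  rw [← normSq_eq_conj_mul_self, ← Complex.sq_norm, hτ]; norm_num

lemma normSq_one_sub_conj_mul_sub_normSq_sub (a z : ℂ) :
    normSq (1 - (starRingEnd ℂ) a * z) - normSq (z - a) = (1 - normSq a) * (1 - normSq z) := by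
  simp only [normSq_apply, sub_re, sub_im, mul_re, mul_im, conj_re, conj_im, one_re, one_im]
  ring

lemma one_sub_conj_mul_ne_zero {a z : ℂ} (ha : ‖a‖ < 1) (hz : ‖z‖ ≤ 1) :
    1 - (starRingEnd ℂ) a * z ≠ 0 := by
  have : ‖(starRingEnd ℂ) a * z‖ < 1 := by
    rw [norm_mul, Complex.norm_conj]
    exact mul_lt_one_of_nonneg_of_lt_one_left (norm_nonneg a) ha hz
  rw [sub_ne_zero]
  rintro h
  simp [← h] at this

lemma diskMobius_mem_unitDisk {a τ z : ℂ} (ha : ‖a‖ < 1) (hτ : ‖τ‖ = 1) (hz : z ∈ unitDisk) :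
    diskMobius a τ z ∈ unitDisk := by
  have hd := one_sub_conj_mul_ne_zero ha (le_of_lt hz)
  have hlt : normSq (z - a) < normSq (1 - (starRingEnd ℂ) a * z) := by
    have := normSq_one_sub_conj_mul_sub_normSq_sub a z
    nlinarith [normSq_lt_one_of_mem_unitDisk ha, normSq_lt_one_of_mem_unitDisk hz]
  rw [← Complex.sq_norm, ← Complex.sq_norm] at hlt
  show ‖diskMobius a τ z‖ < 1
  rw [diskMobius, norm_div, norm_mul, hτ, one_mul, div_lt_one (norm_pos_iff.2 hd)]
  exact lt_of_pow_lt_pow_left₀ 2 (norm_nonneg _) hlt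

lemma leftInvOn_diskMobius {a τ : ℂ} (ha : ‖a‖ < 1) (hτ : ‖τ‖ = 1) :
    Set.LeftInvOn (diskMobius (-τ * a) ((starRingEnd ℂ) τ)) (diskMobius a τ) unitDisk := by
  intro z hz
  have hτ1 := conj_mul_self_of_norm_eq_one hτ
  have ha1 := one_sub_conj_mul_ne_zero ha (le_of_lt ha)
  have hd := one_sub_conj_mul_ne_zero ha (le_of_lt hz)
  have hd' : 1 - z * (starRingEnd ℂ) a ≠ 0 := by rwa [mul_comm z]
  simp only [diskMobius, map_mul, map_neg]
  rw [div_eq_iff]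
  · field_simp
    linear_combination (z - z ^ 2 * (starRingEnd ℂ) a) * hτ1
  · convert div_ne_zero ha1 hd using 1
    field_simp
    linear_combination (starRingEnd ℂ) a * (z - a) * hτ1

lemma rightInvOn_diskMobius {a τ : ℂ} (ha : ‖a‖ < 1) (hτ : ‖τ‖ = 1) :
    Set.RightInvOn (diskMobius (-τ * a) ((starRingEnd ℂ) τ)) (diskMobius a τ) unitDisk := by
  have ha' : ‖-τ * a‖ < 1 := by rwa [norm_mul, norm_neg, hτ, one_mul]
  have hτ' : ‖(starRingEnd ℂ) τ‖ = 1 := by rwa [Complex.norm_conj]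
  have ha'' : -(starRingEnd ℂ) τ * (-τ * a) = a := by
    linear_combination a * conj_mul_self_of_norm_eq_one hτ
  simpa only [Set.RightInvOn, ha'', Complex.conj_conj] using leftInvOn_diskMobius ha' hτ'

lemma IsDiskMobius.mapsTo {m : ℂ → ℂ} (hm : IsDiskMobius m) : Set.MapsTo m unitDisk unitDisk := by
  obtain ⟨a, τ, ha, hτ, rfl⟩ := isDiskMobius_iff.1 hm
  exact fun _ hz => diskMobius_mem_unitDisk ha hτ hz

lemma IsDiskMobius.exists_invOn {m : ℂ → ℂ} (hm : IsDiskMobius m) :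
    ∃ m', IsDiskMobius m' ∧ Set.InvOn m' m unitDisk unitDisk := by
  obtain ⟨a, τ, ha, hτ, rfl⟩ := isDiskMobius_iff.1 hm
  refine ⟨diskMobius (-τ * a) ((starRingEnd ℂ) τ), isDiskMobius_diskMobius ?_ ?_, ?_, ?_⟩
  · rwa [norm_mul, norm_neg, hτ, one_mul]
  · rwa [Complex.norm_conj]
  · exact leftInvOn_diskMobius ha hτ
  · exact rightInvOn_diskMobius ha hτ

/-- The `SU(1,1)` normal form `[[P, -Q], [-conj Q, conj P]]` of a disk automorphism, in which
composition becomes matrix multiplication. -/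
lemma isDiskMobius_of_norm_lt {P Q τ : ℂ} (hQP : ‖Q‖ < ‖P‖) (hτ : ‖τ‖ = 1) :
    IsDiskMobius fun z => τ * (P * z - Q) / ((starRingEnd ℂ) P - (starRingEnd ℂ) Q * z) := by
  have hP : P ≠ 0 := norm_pos_iff.1 ((norm_nonneg Q).trans_lt hQP)
  have hP' : (starRingEnd ℂ) P ≠ 0 := (map_ne_zero _).2 hP
  refine isDiskMobius_iff.2 ⟨Q / P, τ * P / (starRingEnd ℂ) P, ?_, ?_, funext fun z => ?_⟩
  · rwa [norm_div, div_lt_one (norm_pos_iff.2 hP)]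
  · rw [norm_div, norm_mul, Complex.norm_conj, hτ, one_mul, div_self (norm_ne_zero_iff.2 hP)]
  · simp only [diskMobius, map_div₀]
    field_simp

lemma IsDiskMobius.comp {g h : ℂ → ℂ} (hg : IsDiskMobius g) (hh : IsDiskMobius h) :
    ∃ f, IsDiskMobius f ∧ Set.EqOn f (g ∘ h) unitDisk := by
  obtain ⟨b, σ, hb, hσ, rfl⟩ := isDiskMobius_iff.1 hg
  obtain ⟨a, τ, ha, hτ, rfl⟩ := isDiskMobius_iff.1 hh
  have hτ1 := conj_mul_self_of_norm_eq_one hτ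
  set P := τ + b * (starRingEnd ℂ) a
  set Q := τ * a + b
  have hPQ : normSq P - normSq Q = (1 - normSq a) * (1 - normSq b) := by
    have hτn : normSq τ = 1 := by rw [← Complex.sq_norm, hτ, one_pow]
    simp only [P, Q, normSq_apply, add_re, add_im, mul_re, mul_im, conj_re, conj_im] at hτn ⊢
    linear_combination (1 - (a.re * a.re + a.im * a.im)) * hτn
  have hQP : ‖Q‖ < ‖P‖ := by
    refine lt_of_pow_lt_pow_left₀ 2 (norm_nonneg _) ?_
    rw [Complex.sq_norm, Complex.sq_norm]
    nlinarith [normSq_lt_one_of_mem_unitDisk ha, normSq_lt_one_of_mem_unitDisk hb]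
  refine ⟨_, isDiskMobius_of_norm_lt hQP (τ := σ * (starRingEnd ℂ) τ) ?_, fun z hz => ?_⟩
  · rw [norm_mul, Complex.norm_conj, hσ, hτ, one_mul]
  have hD := one_sub_conj_mul_ne_zero ha (le_of_lt hz)
  have hnum : τ * (z - a) / (1 - (starRingEnd ℂ) a * z) - b
      = (P * z - Q) / (1 - (starRingEnd ℂ) a * z) := by
    rw [eq_div_iff hD, sub_mul, div_mul_cancel₀ _ hD]
    ring
  have hden : 1 - (starRingEnd ℂ) b * (τ * (z - a) / (1 - (starRingEnd ℂ) a * z))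
      = τ * ((starRingEnd ℂ) P - (starRingEnd ℂ) Q * z) / (1 - (starRingEnd ℂ) a * z) := by
    rw [eq_div_iff hD, sub_mul, one_mul, mul_assoc, div_mul_cancel₀ _ hD]
    simp only [P, Q, map_add, map_mul, Complex.conj_conj]
    linear_combination (-(1 - (starRingEnd ℂ) a * z)) * hτ1
  simp only [Function.comp_apply, diskMobius, hnum, hden]
  rw [mul_div_assoc', div_div_div_cancel_right₀ hD, eq_inv_of_mul_eq_one_left hτ1, mul_comm τ,
    ← div_div]
  ring

def pseudoDist (z c : ℂ) : ℝ := ‖(z - c) / (1 - (starRingEnd ℂ) c * z)‖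

lemma hypDisk_eq (c : ℂ) (R : ℝ) :
    hypDisk c R = {z | z ∈ unitDisk ∧ pseudoDist z c < Real.tanh R} := rfl

lemma diskMobius_sub_div {a τ z c : ℂ} (ha : ‖a‖ < 1) (hτ : ‖τ‖ = 1)
    (hz : z ∈ unitDisk) (hc : c ∈ unitDisk) :
    (diskMobius a τ z - diskMobius a τ c)
        / (1 - (starRingEnd ℂ) (diskMobius a τ c) * diskMobius a τ z)
      = τ * ((starRingEnd ℂ) (1 - (starRingEnd ℂ) a * c) / (1 - (starRingEnd ℂ) a * c))
        * ((z - c) / (1 - (starRingEnd ℂ) c * z)) := by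
  have hτ1 := conj_mul_self_of_norm_eq_one hτ
  have hDz := one_sub_conj_mul_ne_zero ha (le_of_lt hz)
  have hDc := one_sub_conj_mul_ne_zero ha (le_of_lt hc)
  have hDc' : (starRingEnd ℂ) (1 - (starRingEnd ℂ) a * c) ≠ 0 := (map_ne_zero _).2 hDc
  have hcz := one_sub_conj_mul_ne_zero hc (le_of_lt hz)
  have ha1 := one_sub_conj_mul_ne_zero ha (le_of_lt ha)
  have hnum : diskMobius a τ z - diskMobius a τ c = τ * (1 - (starRingEnd ℂ) a * a) * (z - c)
      / ((1 - (starRingEnd ℂ) a * z) * (1 - (starRingEnd ℂ) a * c)) := by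
    rw [diskMobius, diskMobius, div_sub_div _ _ hDz hDc]
    ring
  have hden : 1 - (starRingEnd ℂ) (diskMobius a τ c) * diskMobius a τ z
      = (1 - (starRingEnd ℂ) a * a) * (1 - (starRingEnd ℂ) c * z)
        / ((starRingEnd ℂ) (1 - (starRingEnd ℂ) a * c) * (1 - (starRingEnd ℂ) a * z)) := by
    rw [diskMobius, diskMobius, map_div₀, div_mul_div_comm, one_sub_div (mul_ne_zero hDc' hDz),
      map_mul, mul_mul_mul_comm]
    congr 1
    simp only [map_mul, map_sub, map_one, Complex.conj_conj]
    linear_combination (-((starRingEnd ℂ) c - (starRingEnd ℂ) a) * (z - a)) * hτ1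
  rw [hnum, hden]
  generalize 1 - (starRingEnd ℂ) a * a = A at *
  generalize 1 - (starRingEnd ℂ) a * z = Dz at *
  generalize 1 - (starRingEnd ℂ) c * z = Dcz at *
  generalize (starRingEnd ℂ) (1 - (starRingEnd ℂ) a * c) = Dc' at *
  generalize 1 - (starRingEnd ℂ) a * c = Dc at *
  field_simp

lemma pseudoDist_diskMobius {a τ z c : ℂ} (ha : ‖a‖ < 1) (hτ : ‖τ‖ = 1)
    (hz : z ∈ unitDisk) (hc : c ∈ unitDisk) :
    pseudoDist (diskMobius a τ z) (diskMobius a τ c) = pseudoDist z c := by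
  have hDc := one_sub_conj_mul_ne_zero ha (le_of_lt hc)
  rw [pseudoDist, diskMobius_sub_div ha hτ hz hc, norm_mul, norm_mul, norm_div, Complex.norm_conj,
    div_self (norm_ne_zero_iff.2 hDc), hτ, one_mul, one_mul, pseudoDist]

lemma IsDiskMobius.pseudoDist_apply {m : ℂ → ℂ} (hm : IsDiskMobius m) {z c : ℂ}
    (hz : z ∈ unitDisk) (hc : c ∈ unitDisk) : pseudoDist (m z) (m c) = pseudoDist z c := by
  obtain ⟨a, τ, ha, hτ, rfl⟩ := isDiskMobius_iff.1 hm
  exact pseudoDist_diskMobius ha hτ hz hc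

lemma IsDiskMobius.image_hypDisk {m : ℂ → ℂ} (hm : IsDiskMobius m) {c : ℂ} (hc : c ∈ unitDisk)
    (R : ℝ) : m '' hypDisk c R = hypDisk (m c) R := by
  obtain ⟨m', hm', -, hright⟩ := hm.exists_invOn
  rw [hypDisk_eq, hypDisk_eq]
  ext w
  constructor
  · rintro ⟨z, ⟨hz, hzc⟩, rfl⟩
    exact ⟨hm.mapsTo hz, by rwa [hm.pseudoDist_apply hz hc]⟩
  · rintro ⟨hw, hwc⟩
    refine ⟨m' w, ⟨hm'.mapsTo hw, ?_⟩, hright hw⟩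
    rwa [← hm.pseudoDist_apply (hm'.mapsTo hw) hc, hright hw]

lemma hasDerivAt_diskMobius {a τ z : ℂ} (hd : 1 - (starRingEnd ℂ) a * z ≠ 0) :
    HasDerivAt (diskMobius a τ)
      (τ * (1 - (starRingEnd ℂ) a * a) / (1 - (starRingEnd ℂ) a * z) ^ 2) z := by
  have hnum : HasDerivAt (fun z => τ * (z - a)) τ z := by
    simpa using ((hasDerivAt_id z).sub_const a).const_mul τ
  have hden : HasDerivAt (fun z => 1 - (starRingEnd ℂ) a * z) (-(starRingEnd ℂ) a) z := by
    simpa using ((hasDerivAt_id z).const_mul ((starRingEnd ℂ) a)).const_sub 1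
  refine (hnum.div hden hd).congr_deriv ?_
  ring

lemma one_sub_normSq_diskMobius {a τ z : ℂ} (hτ : ‖τ‖ = 1)
    (hd : 1 - (starRingEnd ℂ) a * z ≠ 0) :
    1 - normSq (diskMobius a τ z)
      = (1 - normSq a) * (1 - normSq z) / normSq (1 - (starRingEnd ℂ) a * z) := by
  have hτ' : normSq τ = 1 := by rw [← Complex.sq_norm, hτ, one_pow]
  rw [eq_div_iff (normSq_pos.2 hd).ne', diskMobius, normSq_div, normSq_mul, hτ', one_mul,
    sub_mul, div_mul_cancel₀ _ (normSq_pos.2 hd).ne', one_mul,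
    normSq_one_sub_conj_mul_sub_normSq_sub]

lemma setLIntegral_image_withDensity_of_hasDerivAt {f f' : ℂ → ℂ} {ρ : ℂ → ℝ≥0∞} {s : Set ℂ}
    (hρ : Measurable ρ) (hρ_lt_top : ∀ z, ρ z < ∞) (hs : MeasurableSet s)
    (hf' : ∀ z ∈ s, HasDerivAt f (f' z) z) (hf : Set.InjOn f s)
    (hρf : ∀ z ∈ s, ρ (f z) * ENNReal.ofReal (normSq (f' z)) = ρ z) (g : ℂ → ℝ≥0∞) :
    ∫⁻ w in f '' s, g w ∂volume.withDensity ρ = ∫⁻ z in s, g (f z) ∂volume.withDensity ρ := by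
  have hρ' : ∀ t : Set ℂ, ∀ᵐ z ∂volume.restrict t, ρ z < ∞ := fun _ => ae_of_all _ hρ_lt_top
  rw [setLIntegral_withDensity_eq_setLIntegral_mul_non_measurable₀' _ _ hρ.aemeasurable _ (hρ' _),
    setLIntegral_withDensity_eq_setLIntegral_mul_non_measurable₀' _ _ hρ.aemeasurable _ (hρ' _),
    lintegral_image_eq_lintegral_abs_det_fderiv_mul volume hs
      (fun z hz => ((hf' z hz).hasFDerivAt.restrictScalars ℝ).hasFDerivWithinAt) hf]
  refine setLIntegral_congr_fun hs fun z hz => ?_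
  simp only [ContinuousLinearMap.det, ContinuousLinearMap.coe_restrictScalars,
    ContinuousLinearMap.toLinearMap_toSpanSingleton, LinearMap.det_restrictScalars,
    Algebra.norm_complex_eq, LinearMap.det_ring, LinearMap.toSpanSingleton_apply, smul_eq_mul,
    one_mul, MonoidHom.coe_mk, ZeroHom.toFun_eq_coe, MonoidWithZeroHom.toZeroHom_coe,
    OneHom.coe_mk, Pi.mul_apply]
  rw [abs_of_nonneg (normSq_nonneg _), ← mul_assoc, mul_comm (ENNReal.ofReal _), hρf z hz]

lemma IsDiskMobius.setLIntegral_volH_image {m : ℂ → ℂ} (hm : IsDiskMobius m) {s : Set ℂ}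
    (hs : MeasurableSet s) (hsD : s ⊆ unitDisk) (g : ℂ → ℝ≥0∞) :
    ∫⁻ w in m '' s, g w ∂volH = ∫⁻ z in s, g (m z) ∂volH := by
  obtain ⟨m', -, hleft, -⟩ := hm.exists_invOn
  obtain ⟨a, τ, ha, hτ, rfl⟩ := isDiskMobius_iff.1 hm
  have hD : ∀ z ∈ s, 1 - (starRingEnd ℂ) a * z ≠ 0 :=
    fun z hz => one_sub_conj_mul_ne_zero ha (le_of_lt (hsD hz))
  refine setLIntegral_image_withDensity_of_hasDerivAt (by fun_prop) (fun _ => ofReal_lt_top) hs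
    (fun z hz => hasDerivAt_diskMobius (hD z hz)) (hleft.injOn.mono hsD) (fun z hz => ?_) g
  have hτ' : normSq τ = 1 := by rw [← Complex.sq_norm, hτ, one_pow]
  have hz1 := normSq_lt_one_of_mem_unitDisk (hsD hz)
  have ha1 := normSq_lt_one_of_mem_unitDisk ha
  have hDz := normSq_pos.2 (hD z hz)
  have ha2 : (1 : ℂ) - (starRingEnd ℂ) a * a = ((1 - normSq a : ℝ) : ℂ) := by
    push_cast; rw [normSq_eq_conj_mul_self]
  have ha3 : 1 - normSq a ≠ 0 := by linarith
  rw [← ENNReal.ofReal_mul (by positivity), Complex.sq_norm, Complex.sq_norm,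
    one_sub_normSq_diskMobius hτ (hD z hz), ha2, normSq_div, normSq_mul, map_pow, hτ',
    normSq_ofReal]
  congr 1
  field_simp

lemma measurableSet_hypDisk (c : ℂ) (R : ℝ) : MeasurableSet (hypDisk c R) := by
  have h : Measurable fun z => pseudoDist z c :=
    ((measurable_id.sub_const c).div (measurable_const.sub (measurable_const_mul _))).norm
  exact (measurableSet_lt measurable_norm measurable_const).inter
    (measurableSet_lt h measurable_const)

lemma dR_congr (R : ℝ) {μ μ' ν ν' : ℂ → ℝ} (hμ : Set.EqOn μ μ' unitDisk)
    (hν : Set.EqOn ν ν' unitDisk) (z w : ℂ) : dR R μ ν z w = dR R μ' ν' z w :=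
  iInf_congr fun m => setLIntegral_congr_fun (measurableSet_hypDisk z R) fun x hx => by
    rw [hμ hx.1, hν (m.2.1.mapsTo hx.1)]

lemma dR_comp_le (R : ℝ) (μ ν : ℂ → ℝ) {m₁ m₂ : ℂ → ℂ} (hm₁ : IsDiskMobius m₁)
    (hm₂ : IsDiskMobius m₂) {z w : ℂ} (hz : z ∈ unitDisk) (hw : w ∈ unitDisk) :
    dR R (μ ∘ m₁) (ν ∘ m₂) z w ≤ dR R μ ν (m₁ z) (m₂ w) := by
  refine le_iInf fun ⟨m, hm, hmz⟩ => ?_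
  obtain ⟨m₂', hm₂', hleft₂, hright₂⟩ := hm₂.exists_invOn
  obtain ⟨f₁, hf₁, hf₁_eq⟩ := hm.comp hm₁
  obtain ⟨f, hf, hf_eq⟩ := hm₂'.comp hf₁
  have hfz : f z = w := by
    rw [hf_eq hz, Function.comp_apply, hf₁_eq hz, Function.comp_apply, hmz, hleft₂ hw]
  refine iInf_le_of_le ⟨f, hf, hfz⟩ (le_of_eq ?_)
  calc ∫⁻ x in hypDisk z R, ENNReal.ofReal |(μ ∘ m₁) x - (ν ∘ m₂) (f x)| ∂volH
      = ∫⁻ x in hypDisk z R, (fun y => ENNReal.ofReal |μ y - ν (m y)|) (m₁ x) ∂volH := by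
        refine setLIntegral_congr_fun (measurableSet_hypDisk z R) fun x hx => ?_
        have hmx : m (m₁ x) ∈ unitDisk := hm.mapsTo (hm₁.mapsTo hx.1)
        rw [Function.comp_apply, Function.comp_apply, hf_eq hx.1, Function.comp_apply,
          hf₁_eq hx.1, Function.comp_apply, hright₂ hmx]
    _ = ∫⁻ y in m₁ '' hypDisk z R, ENNReal.ofReal |μ y - ν (m y)| ∂volH :=
        (hm₁.setLIntegral_volH_image (measurableSet_hypDisk z R) (fun _ hx => hx.1)
          (fun y => ENNReal.ofReal |μ y - ν (m y)|)).symm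
    _ = ∫⁻ y in hypDisk (m₁ z) R, ENNReal.ofReal |μ y - ν (m y)| ∂volH := by
        rw [hm₁.image_hypDisk hz]

theorem dR_mobius_invariance_general (μ ν : ℂ → ℝ)
    (z₀ w₀ : ℂ) (hz₀ : z₀ ∈ unitDisk) (hw₀ : w₀ ∈ unitDisk) (R : ℝ)
    (m₁ m₂ m₁inv m₂inv : ℂ → ℂ) (hm₁ : IsDiskMobius m₁) (hm₂ : IsDiskMobius m₂)
    (h₁ : ∀ z ∈ unitDisk, m₁inv (m₁ z) = z)
    (h₂ : ∀ z ∈ unitDisk, m₂inv (m₂ z) = z) :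
    dR R (μ ∘ m₁) (ν ∘ m₂) (m₁inv z₀) (m₂inv w₀) = dR R μ ν z₀ w₀ := by
  obtain ⟨m₁', hm₁', -, hright₁⟩ := hm₁.exists_invOn
  obtain ⟨m₂', hm₂', -, hright₂⟩ := hm₂.exists_invOn
  have hz₀' : m₁inv z₀ = m₁' z₀ :=
    (congrArg m₁inv (hright₁ hz₀)).symm.trans (h₁ _ (hm₁'.mapsTo hz₀))
  have hw₀' : m₂inv w₀ = m₂' w₀ :=
    (congrArg m₂inv (hright₂ hw₀)).symm.trans (h₂ _ (hm₂'.mapsTo hw₀))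
  rw [hz₀', hw₀']
  apply le_antisymm
  · simpa only [hright₁ hz₀, hright₂ hw₀] using
      dR_comp_le R μ ν hm₁ hm₂ (hm₁'.mapsTo hz₀) (hm₂'.mapsTo hw₀)
  · calc dR R μ ν z₀ w₀ = dR R ((μ ∘ m₁) ∘ m₁') ((ν ∘ m₂) ∘ m₂') z₀ w₀ :=
          dR_congr R (fun z hz => congrArg μ (hright₁ hz).symm)
            (fun w hw => congrArg ν (hright₂ hw).symm) z₀ w₀
      _ ≤ dR R (μ ∘ m₁) (ν ∘ m₂) (m₁' z₀) (m₂' w₀) := dR_comp_le R _ _ hm₁' hm₂' hz₀ hw₀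

theorem dR_mobius_invariance (μ ν : ℂ → ℝ) (hμ : Measurable μ) (hν : Measurable ν)
    (z₀ w₀ : ℂ) (hz₀ : z₀ ∈ unitDisk) (hw₀ : w₀ ∈ unitDisk) (R : ℝ) (hR : 0 < R)
    (m₁ m₂ m₁inv m₂inv : ℂ → ℂ) (hm₁ : IsDiskMobius m₁) (hm₂ : IsDiskMobius m₂)
    (h₁ : ∀ z ∈ unitDisk, m₁inv (m₁ z) = z) (h₁' : ∀ z ∈ unitDisk, m₁ (m₁inv z) = z)
    (h₂ : ∀ z ∈ unitDisk, m₂inv (m₂ z) = z) (h₂' : ∀ z ∈ unitDisk, m₂ (m₂inv z) = z) :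
    dR R (μ ∘ m₁) (ν ∘ m₂) (m₁inv z₀) (m₂inv w₀) = dR R μ ν z₀ w₀ :=
  dR_mobius_invariance_general μ ν z₀ w₀ hz₀ hw₀ R m₁ m₂ m₁inv m₂inv hm₁ hm₂ h₁ h₂

end
end

section
/- Let μ : 𝔻 → ℝ be continuous and nonnegative with ∫_𝔻 μ dvol_H = 1, let R > 0, and let m be a disk Möbius transformation with inverse m⁻¹ on 𝔻. Set ν := μ ∘ m⁻¹. Then ν is continuous and nonnegative with ∫_𝔻 ν dvol_H = 1, and T^R_d(μ, ν) = 0. -/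
open Complex MeasureTheory ENNReal

noncomputable section

/-!
Disk Möbius maps are isometries of the hyperbolic area: by the Schwarz–Pick equality
`|m'(z)| (1 - |z|²) = 1 - |m z|²`, the Jacobian `|m'|²` exactly compensates the density
`(1 - |z|²)⁻²` of `vol_H`. Hence `m` pushes `μ_H` forward to `ν_H` with `ν = μ ∘ m⁻¹`, so the graph
of `m` is a coupling of `μ_H` and `ν_H`. Along this coupling the cost vanishes, since `m` is itself
admissible in the infimum defining `d^R(z, m z)` and `ν ∘ m = μ` on the disk.
-/

open ComplexConjugate Set

namespace DiskMobius

def mob (a τ : ℂ) (z : ℂ) : ℂ := τ * (z - a) / (1 - conj a * z)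

variable {a τ z : ℂ}

lemma isDiskMobius_mob (ha : ‖a‖ < 1) (hτ : ‖τ‖ = 1) : IsDiskMobius (mob a τ) :=
  ⟨a, τ, ha, hτ, fun _ => rfl⟩

lemma measurable_mob (a τ : ℂ) : Measurable (mob a τ) := by
  unfold mob; fun_prop

lemma one_sub_conj_mul_ne_zero (ha : ‖a‖ < 1) (hz : ‖z‖ < 1) : 1 - conj a * z ≠ 0 := by
  have h : ‖conj a * z‖ < 1 := by
    rw [norm_mul, Complex.norm_conj]
    exact mul_lt_one_of_nonneg_of_lt_one_left (norm_nonneg a) ha hz.le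
  exact sub_ne_zero.2 fun h1 => by simp [← h1] at h

lemma continuousOn_mob (ha : ‖a‖ < 1) : ContinuousOn (mob a τ) unitDisk := fun z hz =>
  (ContinuousAt.div (by fun_prop)
    (continuousAt_const.sub (continuousAt_const.mul continuousAt_id))
    (one_sub_conj_mul_ne_zero ha hz)).continuousWithinAt

lemma normSq_one_sub_conj_mul_sub_normSq_sub (a z : ℂ) :
    normSq (1 - conj a * z) - normSq (z - a) = (1 - normSq a) * (1 - normSq z) := by
  simp only [normSq_apply, sub_re, sub_im, mul_re, mul_im, one_re, one_im, conj_re, conj_im]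
  ring

lemma normSq_eq_one_of_norm_eq_one (hτ : ‖τ‖ = 1) : normSq τ = 1 := by
  rw [normSq_eq_norm_sq, hτ, one_pow]

lemma one_sub_normSq_mob (hτ : ‖τ‖ = 1) (hd : 1 - conj a * z ≠ 0) :
    1 - normSq (mob a τ z) = (1 - normSq a) * (1 - normSq z) / normSq (1 - conj a * z) := by
  have hD := (normSq_pos.2 hd).ne'
  rw [mob, map_div₀, map_mul, normSq_eq_one_of_norm_eq_one hτ, one_mul, eq_div_iff hD, sub_mul,
    div_mul_cancel₀ _ hD, ← normSq_one_sub_conj_mul_sub_normSq_sub, one_mul]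

lemma norm_mob_lt_one (ha : ‖a‖ < 1) (hτ : ‖τ‖ = 1) (hz : ‖z‖ < 1) : ‖mob a τ z‖ < 1 := by
  have hd := one_sub_conj_mul_ne_zero ha hz
  have h := one_sub_normSq_mob hτ hd
  have ha' : normSq a < 1 := by rw [normSq_eq_norm_sq]; nlinarith [norm_nonneg a]
  have hz' : normSq z < 1 := by rw [normSq_eq_norm_sq]; nlinarith [norm_nonneg z]
  have : 0 < 1 - normSq (mob a τ z) := by
    rw [h]; exact div_pos (mul_pos (by linarith) (by linarith)) (normSq_pos.2 hd)
  rw [normSq_eq_norm_sq] at this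
  nlinarith [norm_nonneg (mob a τ z)]

lemma mapsTo_mob (ha : ‖a‖ < 1) (hτ : ‖τ‖ = 1) : MapsTo (mob a τ) unitDisk unitDisk :=
  fun _ hz => norm_mob_lt_one ha hτ hz

lemma leftInvOn_mob (ha : ‖a‖ < 1) (hτ : ‖τ‖ = 1) :
    LeftInvOn (mob (-(a * τ)) (conj τ)) (mob a τ) unitDisk := by
  intro z hz
  have hd := one_sub_conj_mul_ne_zero ha hz
  have hττ : conj τ * τ = 1 := by
    rw [mul_comm, mul_conj, normSq_eq_one_of_norm_eq_one hτ, Complex.ofReal_one]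
  have hw : mob a τ z * (1 - conj a * z) = τ * (z - a) := div_mul_cancel₀ _ hd
  have hE : (1 - conj (-(a * τ)) * mob a τ z) * (1 - conj a * z) = 1 - conj a * a := by
    simp only [map_neg, map_mul]
    linear_combination (conj a * conj τ) * hw + conj a * (z - a) * hττ
  have hE0 : 1 - conj (-(a * τ)) * mob a τ z ≠ 0 :=
    left_ne_zero_of_mul (hE ▸ one_sub_conj_mul_ne_zero ha ha)
  rw [mob, div_eq_iff hE0]
  refine mul_right_cancel₀ hd ?_
  linear_combination conj τ * hw + (z - a + a * (1 - conj a * z)) * hττ - z * hE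

lemma norm_neg_mul_lt_one (ha : ‖a‖ < 1) (hτ : ‖τ‖ = 1) : ‖-(a * τ)‖ < 1 := by
  rwa [norm_neg, norm_mul, hτ, mul_one]

lemma mapsTo_mob_inv (ha : ‖a‖ < 1) (hτ : ‖τ‖ = 1) :
    MapsTo (mob (-(a * τ)) (conj τ)) unitDisk unitDisk :=
  mapsTo_mob (norm_neg_mul_lt_one ha hτ) (by rwa [Complex.norm_conj])

lemma invOn_mob (ha : ‖a‖ < 1) (hτ : ‖τ‖ = 1) :
    InvOn (mob (-(a * τ)) (conj τ)) (mob a τ) unitDisk unitDisk := by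
  refine ⟨leftInvOn_mob ha hτ, ?_⟩
  have h := leftInvOn_mob (norm_neg_mul_lt_one ha hτ) (τ := conj τ)
    (by rwa [Complex.norm_conj])
  rwa [Complex.conj_conj, neg_mul, neg_neg, mul_assoc, mul_conj, normSq_eq_one_of_norm_eq_one hτ,
    Complex.ofReal_one, mul_one] at h

lemma bijOn_mob (ha : ‖a‖ < 1) (hτ : ‖τ‖ = 1) : BijOn (mob a τ) unitDisk unitDisk :=
  (invOn_mob ha hτ).bijOn (mapsTo_mob ha hτ) (mapsTo_mob_inv ha hτ)

lemma hasDerivAt_mob (τ : ℂ) (hd : 1 - conj a * z ≠ 0) :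
    HasDerivAt (mob a τ) (τ * (1 - conj a * a) / (1 - conj a * z) ^ 2) z := by
  have hnum : HasDerivAt (fun z => τ * (z - a)) τ z := by
    simpa using ((hasDerivAt_id z).sub_const a).const_mul τ
  have hden : HasDerivAt (fun z => 1 - conj a * z) (-conj a) z := by
    simpa using ((hasDerivAt_id z).const_mul (conj a)).const_sub 1
  exact (hnum.div hden hd).congr_deriv (by ring)

lemma normSq_deriv_mob_mul (hτ : ‖τ‖ = 1) (hd : 1 - conj a * z ≠ 0) :
    normSq (τ * (1 - conj a * a) / (1 - conj a * z) ^ 2) * (1 - normSq z) ^ 2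
      = (1 - normSq (mob a τ z)) ^ 2 := by
  have haa : 1 - conj a * a = ((1 - normSq a : ℝ) : ℂ) := by
    rw [mul_comm, mul_conj]; push_cast; ring
  rw [one_sub_normSq_mob hτ hd, haa, map_div₀, map_mul, map_pow, normSq_eq_one_of_norm_eq_one hτ,
    normSq_ofReal]
  field_simp [(normSq_pos.2 hd).ne']

lemma det_restrictScalars_smulRight (c : ℂ) :
    (((1 : ℂ →L[ℂ] ℂ).smulRight c).restrictScalars ℝ).det = normSq c := by
  simp [ContinuousLinearMap.det, LinearMap.det_restrictScalars, Algebra.norm_complex_apply]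

lemma measurable_volH_density :
    Measurable fun z : ℂ => ENNReal.ofReal (((1 - ‖z‖ ^ 2) ^ 2)⁻¹) := by
  fun_prop

lemma setLIntegral_volH_image_mob (ha : ‖a‖ < 1) (hτ : ‖τ‖ = 1) (f : ℂ → ℝ≥0∞) {s : Set ℂ}
    (hs : MeasurableSet s) (hsD : s ⊆ unitDisk) :
    ∫⁻ w in mob a τ '' s, f w ∂volH = ∫⁻ z in s, f (mob a τ z) ∂volH := by
  have hderiv : ∀ z ∈ s, HasFDerivWithinAt (mob a τ)
      (((1 : ℂ →L[ℂ] ℂ).smulRight (τ * (1 - conj a * a) / (1 - conj a * z) ^ 2)).restrictScalars ℝ)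
      s z := fun z hz =>
    ((hasDerivAt_mob τ (one_sub_conj_mul_ne_zero ha (hsD hz))).hasFDerivAt.restrictScalars
      ℝ).hasFDerivWithinAt
  have hinj : InjOn (mob a τ) s := (bijOn_mob ha hτ).injOn.mono hsD
  have hfin : ∀ t : Set ℂ, ∀ᵐ z ∂volume.restrict t, ENNReal.ofReal (((1 - ‖z‖ ^ 2) ^ 2)⁻¹) < ∞ :=
    fun _ => ae_of_all _ fun _ => ofReal_lt_top
  rw [volH, setLIntegral_withDensity_eq_setLIntegral_mul_non_measurable _ measurable_volH_density
      _ (measurable_image_of_fderivWithin hs hderiv hinj) (hfin _),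
    setLIntegral_withDensity_eq_setLIntegral_mul_non_measurable _ measurable_volH_density
      _ hs (hfin _),
    lintegral_image_eq_lintegral_abs_det_fderiv_mul volume hs hderiv hinj]
  refine setLIntegral_congr_fun hs fun z hz => ?_
  have hd := one_sub_conj_mul_ne_zero ha (hsD hz)
  have hmz : normSq (mob a τ z) < 1 := by
    rw [normSq_eq_norm_sq]
    exact pow_lt_one₀ (norm_nonneg _) (norm_mob_lt_one ha hτ (hsD hz)) two_ne_zero
  have key := normSq_deriv_mob_mul hτ hd
  have hc : normSq (τ * (1 - conj a * a) / (1 - conj a * z) ^ 2) ≠ 0 := by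
    intro h
    rw [h, zero_mul] at key
    nlinarith
  simp only [Pi.mul_apply, det_restrictScalars_smulRight, abs_of_nonneg (normSq_nonneg _),
    ← mul_assoc]
  rw [← ofReal_mul (normSq_nonneg _), ← normSq_eq_norm_sq, ← normSq_eq_norm_sq, ← key,
    mul_inv, ← mul_assoc, mul_inv_cancel₀ hc, one_mul]

end DiskMobius

open DiskMobius

lemma measurableSet_unitDisk : MeasurableSet unitDisk :=
  (isOpen_lt continuous_norm continuous_const).measurableSet

lemma muH_apply (μ : ℂ → ℝ) {t : Set ℂ} (ht : MeasurableSet t) :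
    muH μ t = ∫⁻ z in t ∩ unitDisk, ENNReal.ofReal (μ z) ∂volH := by
  rw [muH, withDensity_apply _ ht, Measure.restrict_restrict ht]

lemma muH_univ (μ : ℂ → ℝ) : muH μ univ = ∫⁻ z in unitDisk, ENNReal.ofReal (μ z) ∂volH := by
  rw [muH_apply μ MeasurableSet.univ, univ_inter]

lemma map_muH_mob {a τ : ℂ} (ha : ‖a‖ < 1) (hτ : ‖τ‖ = 1) {μ ν : ℂ → ℝ}
    (hν : ∀ z ∈ unitDisk, ν (mob a τ z) = μ z) : (muH μ).map (mob a τ) = muH ν := by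
  ext t ht
  have hs : MeasurableSet (mob a τ ⁻¹' t ∩ unitDisk) :=
    (measurable_mob a τ ht).inter measurableSet_unitDisk
  have himage : mob a τ '' (mob a τ ⁻¹' t ∩ unitDisk) = t ∩ unitDisk := by
    rw [image_preimage_inter, (bijOn_mob ha hτ).image_eq]
  rw [Measure.map_apply (measurable_mob a τ) ht, muH_apply μ (measurable_mob a τ ht),
    muH_apply ν ht, ← himage, setLIntegral_volH_image_mob ha hτ _ hs inter_subset_right]
  exact setLIntegral_congr_fun hs fun z hz => by rw [hν z hz.2]

lemma dR_eq_zero_of_comp {R : ℝ} {μ ν : ℂ → ℝ} {m : ℂ → ℂ} (hm : IsDiskMobius m)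
    (hν : ∀ z ∈ unitDisk, ν (m z) = μ z) (z : ℂ) : dR R μ ν z (m z) = 0 := by
  refine nonpos_iff_eq_zero.1 ?_
  calc dR R μ ν z (m z) ≤ ∫⁻ w in hypDisk z R, ENNReal.ofReal |μ w - ν (m w)| ∂volH :=
        iInf_le_of_le ⟨m, hm, rfl⟩ le_rfl
    _ ≤ ∫⁻ w in unitDisk, ENNReal.ofReal |μ w - ν (m w)| ∂volH :=
        lintegral_mono_set fun w hw => hw.1
    _ = 0 := setLIntegral_eq_zero measurableSet_unitDisk fun w hw => by simp [hν w hw]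

lemma TRd_le_lintegral_dR_graph {R : ℝ} {μ ν : ℂ → ℝ} {m : ℂ → ℂ} (hm : Measurable m)
    (hmap : (muH μ).map m = muH ν) : TRd R μ ν ≤ ∫⁻ z, dR R μ ν z (m z) ∂muH μ := by
  have hgraph : Measurable fun z => (z, m z) := measurable_id.prodMk hm
  refine iInf_le_of_le ⟨(muH μ).map fun z => (z, m z), ?_, ?_⟩ (lintegral_map_le _ _)
  · rw [Measure.map_map measurable_fst hgraph]
    exact Measure.map_id
  · rwa [Measure.map_map measurable_snd hgraph]

lemma TRd_eq_zero_of_comp_mob {a τ : ℂ} (ha : ‖a‖ < 1) (hτ : ‖τ‖ = 1) (R : ℝ) {μ ν : ℂ → ℝ}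
    (hν : ∀ z ∈ unitDisk, ν (mob a τ z) = μ z) : TRd R μ ν = 0 := by
  refine nonpos_iff_eq_zero.1 ((TRd_le_lintegral_dR_graph (measurable_mob a τ)
    (map_muH_mob ha hτ hν)).trans_eq ?_)
  simp [dR_eq_zero_of_comp (isDiskMobius_mob ha hτ) hν]

theorem TRd_pushforward_zero_general (μ : ℂ → ℝ)
    (hμc : ContinuousOn μ unitDisk) (hμ0 : ∀ z ∈ unitDisk, 0 ≤ μ z)
    (hμ1 : ∫⁻ z in unitDisk, ENNReal.ofReal (μ z) ∂volH = 1)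
    (R : ℝ)
    (m minv : ℂ → ℂ) (hm : IsDiskMobius m)
    (hinv₁ : ∀ z ∈ unitDisk, minv (m z) = z) :
    ContinuousOn (μ ∘ minv) unitDisk ∧ (∀ w ∈ unitDisk, 0 ≤ (μ ∘ minv) w) ∧
    (∫⁻ w in unitDisk, ENNReal.ofReal ((μ ∘ minv) w) ∂volH = 1) ∧
    TRd R μ (μ ∘ minv) = 0 := by
  obtain ⟨a, τ, ha, hτ, hm⟩ := hm
  obtain rfl : m = mob a τ := funext hm
  have hminv : EqOn minv (mob (-(a * τ)) (conj τ)) unitDisk := fun w hw => by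
    simpa only [(invOn_mob ha hτ).2 hw] using hinv₁ _ (mapsTo_mob_inv ha hτ hw)
  have hcomp : ∀ z ∈ unitDisk, (μ ∘ minv) (mob a τ z) = μ z := fun z hz =>
    congrArg μ (hinv₁ z hz)
  refine ⟨?_, ?_, ?_, TRd_eq_zero_of_comp_mob ha hτ R hcomp⟩
  · exact (hμc.comp (continuousOn_mob (norm_neg_mul_lt_one ha hτ))
      (mapsTo_mob_inv ha hτ)).congr fun w hw => congrArg μ (hminv hw)
  · intro w hw
    rw [Function.comp_apply, hminv hw]
    exact hμ0 _ (mapsTo_mob_inv ha hτ hw)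
  · rw [← muH_univ, ← map_muH_mob ha hτ hcomp, Measure.map_apply (measurable_mob a τ)
      MeasurableSet.univ, preimage_univ, muH_univ, hμ1]

theorem TRd_pushforward_zero (μ : ℂ → ℝ)
    (hμc : ContinuousOn μ unitDisk) (hμ0 : ∀ z ∈ unitDisk, 0 ≤ μ z)
    (hμ1 : ∫⁻ z in unitDisk, ENNReal.ofReal (μ z) ∂volH = 1)
    (R : ℝ) (hR : 0 < R)
    (m minv : ℂ → ℂ) (hm : IsDiskMobius m)
    (hinv₁ : ∀ z ∈ unitDisk, minv (m z) = z)
    (hinv₂ : ∀ w ∈ unitDisk, m (minv w) = w) :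
    ContinuousOn (μ ∘ minv) unitDisk ∧ (∀ w ∈ unitDisk, 0 ≤ (μ ∘ minv) w) ∧
    (∫⁻ w in unitDisk, ENNReal.ofReal ((μ ∘ minv) w) ∂volH = 1) ∧
    TRd R μ (μ ∘ minv) = 0 :=
  TRd_pushforward_zero_general μ hμc hμ0 hμ1 R m minv hm hinv₁

end
end

section
/- Let m(z) = τ·(z − a)/(1 − conj(a)·z) be a disk Möbius transformation (a ∈ 𝔻, |τ| = 1), and let 0 < r < 1. Then for all z, w ∈ ℂ with |z| ≤ r and |w| ≤ r, |m(z) − m(w)| ≤ ((1 − |a|²)/(1 − r·|a|)²) · |z − w|; in particular, m restricted to the closed disk of radius r is Lipschitz with constant (1 − |a|²)/(1 − r·|a|)². -/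
open Complex MeasureTheory ENNReal

noncomputable section

/-! The difference `m z - m w` factors as `τ (1 - |a|²) (z - w) / ((1 - ā z) (1 - ā w))`, and on
the disk of radius `r` each factor of the denominator has modulus at least `1 - r |a|`. -/

open ComplexConjugate

theorem mobius_sub_mobius {K : Type*} [Field K] (τ a b z w : K)
    (hz : 1 - b * z ≠ 0) (hw : 1 - b * w ≠ 0) :
    τ * (z - a) / (1 - b * z) - τ * (w - a) / (1 - b * w)
      = τ * (1 - a * b) * (z - w) / ((1 - b * z) * (1 - b * w)) := by
  rw [div_sub_div _ _ hz hw]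
  ring

theorem one_sub_le_norm_one_sub_mul {R : Type*} [NormedRing R] [NormOneClass R] {b z : R} {s : ℝ}
    (h : ‖b‖ * ‖z‖ ≤ s) : 1 - s ≤ ‖1 - b * z‖ :=
  calc 1 - s ≤ ‖(1 : R)‖ - ‖b * z‖ := by
        rw [norm_one]; linarith [norm_mul_le b z]
    _ ≤ ‖1 - b * z‖ := norm_sub_norm_le _ _

theorem Complex.norm_one_sub_mul_conj {a : ℂ} (ha : ‖a‖ ≤ 1) :
    ‖1 - a * conj a‖ = 1 - ‖a‖ ^ 2 := by
  rw [mul_conj', ← ofReal_pow, ← ofReal_one, ← ofReal_sub, norm_real, Real.norm_eq_abs,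
    abs_of_nonneg (by nlinarith [norm_nonneg a])]

theorem mobius_lipschitz_on_ball_general (a τ : ℂ) (ha : ‖a‖ < 1)
    (hτ : ‖τ‖ = 1) (r : ℝ) (hr1 : r < 1)
    (z w : ℂ) (hz : ‖z‖ ≤ r) (hw : ‖w‖ ≤ r) :
    ‖τ * (z - a) / (1 - (starRingEnd ℂ) a * z)
        - τ * (w - a) / (1 - (starRingEnd ℂ) a * w)‖
      ≤ (1 - ‖a‖ ^ 2) / (1 - r * ‖a‖) ^ 2 * ‖z - w‖ := by
  have hρ : 0 < 1 - r * ‖a‖ := by nlinarith [norm_nonneg a, norm_nonneg z]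
  have hden {u : ℂ} (hu : ‖u‖ ≤ r) : 1 - r * ‖a‖ ≤ ‖1 - conj a * u‖ :=
    one_sub_le_norm_one_sub_mul <| by
      rw [norm_conj, mul_comm r]; exact mul_le_mul_of_nonneg_left hu (norm_nonneg a)
  have hne {u : ℂ} (hu : ‖u‖ ≤ r) : 1 - conj a * u ≠ 0 :=
    norm_pos_iff.mp (hρ.trans_le (hden hu))
  rw [mobius_sub_mobius _ _ _ _ _ (hne hz) (hne hw), norm_div, norm_mul, norm_mul, norm_mul, hτ,
    one_mul, Complex.norm_one_sub_mul_conj ha.le, div_mul_eq_mul_div, sq (1 - r * ‖a‖)]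
  have hnum : 0 ≤ 1 - ‖a‖ ^ 2 := by nlinarith [norm_nonneg a]
  gcongr
  exacts [hden hz, hden hw]

theorem mobius_lipschitz_on_ball (a τ : ℂ) (ha : ‖a‖ < 1)
    (hτ : ‖τ‖ = 1) (r : ℝ) (hr0 : 0 < r) (hr1 : r < 1)
    (z w : ℂ) (hz : ‖z‖ ≤ r) (hw : ‖w‖ ≤ r) :
    ‖τ * (z - a) / (1 - (starRingEnd ℂ) a * z)
        - τ * (w - a) / (1 - (starRingEnd ℂ) a * w)‖
      ≤ (1 - ‖a‖ ^ 2) / (1 - r * ‖a‖) ^ 2 * ‖z - w‖ :=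
  mobius_lipschitz_on_ball_general a τ ha hτ r hr1 z w hz hw

end
end

section
/- Let N and M be natural numbers with 0 < M < N, and let P ⊆ Matrix (Fin N) (Fin N) ℝ be the set of matrices π satisfying: π i j ≥ 0 for all i, j; Σ_i π i j ≤ 1 for every column j; Σ_j π i j ≤ 1 for every row i; and Σ_{i,j} π i j = M. Then P is convex, and a matrix π is an extreme point of P if and only if π ∈ P and every entry of π is equal to 0 or to 1. -/
open Finset

/-- The polytope of sub-doubly-stochastic `N × N` matrices with total mass `M`. -/
def transportPolytope (N M : ℕ) : Set (Matrix (Fin N) (Fin N) ℝ) :=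
  {π | (∀ i j, 0 ≤ π i j) ∧ (∀ j, ∑ i, π i j ≤ 1) ∧ (∀ i, ∑ j, π i j ≤ 1) ∧
    ∑ i, ∑ j, π i j = (M : ℝ)}

/-!
Matrices with entries in `[0, 1]` form a cube whose extreme points are the 0/1 matrices, so every
0/1 point of the polytope is extreme. Conversely the polytope is the convex hull of its 0/1 points:
bordering `π` with `N - M` slack rows and columns, which spread the row and column deficits of `π`
evenly and meet in a zero block, gives a doubly stochastic matrix. By Birkhoff's theorem it is a
convex combination of permutation matrices; each of these vanishes on the zero block, so its
top-left block is a 0/1 point of the polytope.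
-/

open Matrix

theorem convex_transportPolytope (N M : ℕ) : Convex ℝ (transportPolytope N M) := by
  rintro x ⟨hx₀, hx_col, hx_row, hx_sum⟩ y ⟨hy₀, hy_col, hy_row, hy_sum⟩ a b ha hb hab
  simp only [transportPolytope, Set.mem_ofPred_eq, Matrix.add_apply, Matrix.smul_apply, smul_eq_mul,
    sum_add_distrib, ← mul_sum]
  refine ⟨fun i j ↦ by have := hx₀ i j; have := hy₀ i j; positivity, fun j ↦ ?_, fun i ↦ ?_, ?_⟩
  · nlinarith [hx_col j, hy_col j]
  · nlinarith [hx_row i, hy_row i]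
  · rw [hx_sum, hy_sum, ← add_mul, hab, one_mul]

theorem mem_extremePoints_of_entries_mem_Icc {m n : Type*} {S : Set (Matrix m n ℝ)}
    (hS : ∀ x ∈ S, ∀ i j, x i j ∈ Set.Icc 0 1) {π : Matrix m n ℝ} (hπ : π ∈ S)
    (h01 : ∀ i j, π i j = 0 ∨ π i j = 1) : π ∈ S.extremePoints ℝ := by
  refine inter_extremePoints_subset_extremePoints_of_subset
    (A := Set.univ.pi fun _ ↦ Set.univ.pi fun _ ↦ Set.Icc (0 : ℝ) 1)
    (fun x hx ↦ by simpa only [Set.mem_univ_pi] using hS x hx) ⟨hπ, ?_⟩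
  change π ∈ (Set.univ.pi fun _ ↦ Set.univ.pi fun _ ↦ Set.Icc (0 : ℝ) 1 :
    Set (m → n → ℝ)).extremePoints ℝ
  simp only [extremePoints_pi, Set.extremePoints_Icc zero_le_one]
  exact fun i _ j _ ↦ h01 i j

theorem entry_mem_Icc_of_mem_transportPolytope {N M : ℕ} {π : Matrix (Fin N) (Fin N) ℝ}
    (hπ : π ∈ transportPolytope N M) (i j : Fin N) : π i j ∈ Set.Icc 0 1 :=
  ⟨hπ.1 i j, (single_le_sum (fun j' _ ↦ hπ.1 i j') (mem_univ j)).trans (hπ.2.2.1 i)⟩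

theorem transpose_mem_transportPolytope {N M : ℕ} {π : Matrix (Fin N) (Fin N) ℝ}
    (hπ : π ∈ transportPolytope N M) : πᵀ ∈ transportPolytope N M := by
  obtain ⟨h₀, h_col, h_row, h_sum⟩ := hπ
  exact ⟨fun i j ↦ h₀ j i, h_row, h_col, by simpa only [transpose_apply, sum_comm] using h_sum⟩

section SlackExtension

variable {n : Type*} [Fintype n]

noncomputable def slackExtension (k : Type*) [Fintype k] (π : Matrix n n ℝ) :
    Matrix (n ⊕ k) (n ⊕ k) ℝ :=
  fromBlocks π (of fun i _ ↦ (1 - ∑ j, π i j) / Fintype.card k)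
    (of fun _ j ↦ (1 - ∑ i, π i j) / Fintype.card k) 0

variable {k : Type*} [Fintype k]

theorem slackExtension_transpose (π : Matrix n n ℝ) :
    (slackExtension k π)ᵀ = slackExtension k πᵀ := by
  simp only [slackExtension, fromBlocks_transpose, transpose_zero]
  congr

variable {N M : ℕ} [Nonempty k] {π : Matrix (Fin N) (Fin N) ℝ}

theorem sum_slackExtension_row (hπ : π ∈ transportPolytope N M) (hk : Fintype.card k + M = N)
    (a : Fin N ⊕ k) : ∑ b, slackExtension k π a b = 1 := by
  have hK : (Fintype.card k : ℝ) ≠ 0 := by positivity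
  rcases a with i | l
  · simp only [slackExtension, Fintype.sum_sum_type, fromBlocks_apply₁₁, fromBlocks_apply₁₂,
      of_apply, sum_const, card_univ, nsmul_eq_mul]
    field_simp
    ring
  · simp only [slackExtension, Fintype.sum_sum_type, fromBlocks_apply₂₁, fromBlocks_apply₂₂,
      of_apply, Matrix.zero_apply, sum_const_zero, add_zero, ← sum_div, sum_sub_distrib, sum_const,
      card_univ, Fintype.card_fin, nsmul_eq_mul, mul_one]
    rw [sum_comm, hπ.2.2.2, div_eq_one_iff_eq hK, ← hk]
    push_cast
    ring

theorem slackExtension_mem_doublyStochastic [DecidableEq k] (hπ : π ∈ transportPolytope N M)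
    (hk : Fintype.card k + M = N) : slackExtension k π ∈ doublyStochastic ℝ (Fin N ⊕ k) := by
  refine (mem_doublyStochastic_iff_sum).2 ⟨?_, sum_slackExtension_row hπ hk, fun b ↦ ?_⟩
  · have h : ∀ i, (0 : ℝ) ≤ 1 - ∑ j, π i j := fun i ↦ sub_nonneg.2 (hπ.2.2.1 i)
    have h' : ∀ j, (0 : ℝ) ≤ 1 - ∑ i, π i j := fun j ↦ sub_nonneg.2 (hπ.2.1 j)
    rintro (i | l) (j | l') <;> simp [slackExtension, hπ.1, h, h', div_nonneg]
  · simpa only [← transpose_apply (slackExtension k π), slackExtension_transpose]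
      using sum_slackExtension_row (transpose_mem_transportPolytope hπ) hk b

end SlackExtension

theorem toBlocks₁₁_mem_transportPolytope {N M : ℕ} {k : Type*} [Fintype k] [DecidableEq k]
    {B : Matrix (Fin N ⊕ k) (Fin N ⊕ k) ℝ} (hB : B ∈ doublyStochastic ℝ (Fin N ⊕ k))
    (h₂₂ : B.toBlocks₂₂ = 0) (hk : Fintype.card k + M = N) :
    B.toBlocks₁₁ ∈ transportPolytope N M := by
  have h₂₂' : ∀ l l', B (.inr l) (.inr l') = 0 := fun l l' ↦ congrFun₂ h₂₂ l l'
  have hrow a := sum_row_of_mem_doublyStochastic hB a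
  have hcol b := sum_col_of_mem_doublyStochastic hB b
  simp only [Fintype.sum_sum_type] at hrow hcol
  have hpos a b := nonneg_of_mem_doublyStochastic hB (i := a) (j := b)
  refine ⟨fun i j ↦ hpos _ _, fun j ↦ ?_, fun i ↦ ?_, ?_⟩
  · have := hcol (.inl j)
    have : 0 ≤ ∑ l, B (.inr l) (.inl j) := sum_nonneg fun l _ ↦ hpos _ _
    simp only [toBlocks₁₁, of_apply]
    linarith
  · have := hrow (.inl i)
    have : 0 ≤ ∑ l, B (.inl i) (.inr l) := sum_nonneg fun l _ ↦ hpos _ _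
    simp only [toBlocks₁₁, of_apply]
    linarith
  · have hbottom : ∑ l, ∑ j, B (.inr l) (.inl j) = Fintype.card k := by
      simpa [h₂₂'] using sum_congr rfl fun l (_ : l ∈ univ) ↦ hrow (.inr l)
    have hleft : ∑ j, ∑ a, B a (.inl j) = N := by
      simpa using sum_congr rfl fun j (_ : j ∈ univ) ↦ hcol (.inl j)
    simp only [toBlocks₁₁, of_apply, Fintype.sum_sum_type, sum_add_distrib] at hleft ⊢
    have hN : (N : ℝ) = Fintype.card k + M := by exact_mod_cast hk.symm
    rw [sum_comm] at hbottom
    rw [sum_comm]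
    linarith

theorem Finset.sum_smul_mem_convexHull {𝕜 E ι : Type*} [Field 𝕜] [LinearOrder 𝕜]
    [IsStrictOrderedRing 𝕜] [AddCommGroup E] [Module 𝕜 E] {s : Set E} (t : Finset ι)
    {w : ι → 𝕜} {z : ι → E} (hw₀ : ∀ i ∈ t, 0 ≤ w i) (hw₁ : ∑ i ∈ t, w i = 1)
    (hz : ∀ i ∈ t, w i ≠ 0 → z i ∈ s) : ∑ i ∈ t, w i • z i ∈ convexHull 𝕜 s := by
  classical
  rw [← sum_filter_of_ne fun i _ h ↦ left_ne_zero_of_smul h]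
  exact (convex_convexHull 𝕜 s).sum_mem (fun i hi ↦ hw₀ i (mem_filter.1 hi).1)
    (by rwa [sum_filter_ne_zero]) fun i hi ↦
      subset_convexHull 𝕜 s <| hz i (mem_filter.1 hi).1 (mem_filter.1 hi).2

theorem Equiv.Perm.permMatrix_apply_eq_zero_or_eq_one {n : Type*} [DecidableEq n]
    (σ : Equiv.Perm n) (a b : n) :
    σ.permMatrix ℝ a b = 0 ∨ σ.permMatrix ℝ a b = 1 := by
  simp only [Equiv.Perm.permMatrix, PEquiv.toMatrix_apply]
  split_ifs <;> simp

theorem transportPolytope_subset_convexHull {N M : ℕ} (hMN : M < N) :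
    transportPolytope N M ⊆
      convexHull ℝ {π ∈ transportPolytope N M | ∀ i j, π i j = 0 ∨ π i j = 1} := by
  intro π hπ
  have : Nonempty (Fin (N - M)) := ⟨⟨0, by omega⟩⟩
  have hk : Fintype.card (Fin (N - M)) + M = N := by rw [Fintype.card_fin]; omega
  obtain ⟨w, hw₀, hw₁, hw⟩ :=
    exists_eq_sum_perm_of_mem_doublyStochastic (slackExtension_mem_doublyStochastic hπ hk)
  have hentry a b : ∑ σ, w σ * σ.permMatrix ℝ a b = slackExtension (Fin (N - M)) π a b := by
    rw [← hw, Matrix.sum_apply]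
    simp only [Matrix.smul_apply, smul_eq_mul]
  have h₂₂ σ (hσ : w σ ≠ 0) : (σ.permMatrix ℝ).toBlocks₂₂ = 0 := by
    ext l l'
    have hzero := hentry (.inr l) (.inr l')
    simp only [slackExtension, fromBlocks_apply₂₂, Matrix.zero_apply] at hzero
    have hterm := (sum_eq_zero_iff_of_nonneg fun σ _ ↦ mul_nonneg (hw₀ σ)
      (nonneg_of_mem_doublyStochastic permMatrix_mem_doublyStochastic)).1 hzero σ (mem_univ σ)
    exact (mul_eq_zero.1 hterm).resolve_left hσ
  have hπ_eq : π = ∑ σ, w σ • (σ.permMatrix ℝ).toBlocks₁₁ := by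
    ext i j
    rw [Matrix.sum_apply]
    simpa only [Matrix.smul_apply, toBlocks₁₁, of_apply, smul_eq_mul, slackExtension,
      fromBlocks_apply₁₁] using (hentry (.inl i) (.inl j)).symm
  rw [hπ_eq]
  refine sum_smul_mem_convexHull _ (fun σ _ ↦ hw₀ σ) hw₁ fun σ _ hσ ↦ ⟨?_, fun i j ↦ ?_⟩
  · exact toBlocks₁₁_mem_transportPolytope permMatrix_mem_doublyStochastic (h₂₂ σ hσ) hk
  · exact σ.permMatrix_apply_eq_zero_or_eq_one _ _

theorem convexHull_zero_one_points_eq_transportPolytope {N M : ℕ} (hMN : M < N) :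
    convexHull ℝ {π ∈ transportPolytope N M | ∀ i j, π i j = 0 ∨ π i j = 1} =
      transportPolytope N M :=
  (convexHull_min (fun _ hπ ↦ hπ.1) (convex_transportPolytope N M)).antisymm
    (transportPolytope_subset_convexHull hMN)

theorem extreme_points_of_transport_polytope_general (N M : ℕ) (hMN : M < N) :
    Convex ℝ (transportPolytope N M) ∧
    ∀ π : Matrix (Fin N) (Fin N) ℝ,
      π ∈ (transportPolytope N M).extremePoints ℝ ↔
        (π ∈ transportPolytope N M ∧ ∀ i j, π i j = 0 ∨ π i j = 1) := by
  refine ⟨convex_transportPolytope N M, fun π ↦ ⟨fun hπ ↦ ?_, fun ⟨hπ, h01⟩ ↦ ?_⟩⟩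
  · rw [← convexHull_zero_one_points_eq_transportPolytope hMN] at hπ
    exact (extremePoints_convexHull_subset hπ :)
  · exact mem_extremePoints_of_entries_mem_Icc
      (fun _ hx ↦ entry_mem_Icc_of_mem_transportPolytope hx) hπ h01

theorem extreme_points_of_transport_polytope (N M : ℕ) (hM : 0 < M) (hMN : M < N) :
    Convex ℝ (transportPolytope N M) ∧
    ∀ π : Matrix (Fin N) (Fin N) ℝ,
      π ∈ (transportPolytope N M).extremePoints ℝ ↔
        (π ∈ transportPolytope N M ∧ ∀ i j, π i j = 0 ∨ π i j = 1) :=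
  extreme_points_of_transport_polytope_general N M hMN
end
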